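/- Let A be a real 2×2 matrix satisfying A³ − A − I = 0. Then either A = ρ·I, where ρ is the plastic number, or there exists an invertible real 2×2 matrix C such that A = C⁻¹·B·C, where B is the matrix with rows (α, 1 − α²) and (1, 0) and α is the unique real solution of x³ − x + 1 = 0. -/
import Mathlib


/-- The plastic number `ρ`, the unique real solution of `x³ − x − 1 = 0`. -/
noncomputable def plasticNumber : ℝ :=
  ((9 + Real.sqrt 69) / 18) ^ ((1 : ℝ) / 3) + ((9 - Real.sqrt 69) / 18) ^ ((1 : ℝ) / 3)

/-- Uniqueness of the real root of `x³ − x − 1`. -/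
theorem plastic_root_unique {x y : ℝ} (hx : x^3 - x - 1 = 0) (hy : y^3 - y - 1 = 0) : x = y := by
  have hx1 : 1 < x := by nlinarith [sq_nonneg x, sq_nonneg (x-1), sq_nonneg (x+1)]
  have hy1 : 1 < y := by nlinarith [sq_nonneg y, sq_nonneg (y-1), sq_nonneg (y+1)]
  have key : (x - y) * (x^2 + x*y + y^2 - 1) = 0 := by linear_combination hx - hy
  have pos : x^2 + x*y + y^2 - 1 > 0 := by nlinarith
  rcases mul_eq_zero.1 key with h | h
  · linarith
  · linarith

theorem plastic_root_bound {x : ℝ} (hx : x^3 - x - 1 = 0) : 3 * x^2 > 4 := by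
  have hx1 : 1 < x := by nlinarith [sq_nonneg x, sq_nonneg (x-1), sq_nonneg (x+1)]
  nlinarith [sq_nonneg (x - 5/4), sq_nonneg x]

/-- The plastic number satisfies its cubic. -/
theorem plastic_cubic : plasticNumber ^ 3 - plasticNumber - 1 = 0 := by
  have hs : Real.sqrt 69 ≤ 9 := by
    rw [show (9:ℝ) = Real.sqrt 81 by rw [show (81:ℝ) = 9^2 by norm_num, Real.sqrt_sq]; norm_num]
    exact Real.sqrt_le_sqrt (by norm_num)
  have hs0 : (0:ℝ) ≤ Real.sqrt 69 := Real.sqrt_nonneg _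
  set u : ℝ := ((9 + Real.sqrt 69) / 18) ^ ((1 : ℝ) / 3) with hu
  set v : ℝ := ((9 - Real.sqrt 69) / 18) ^ ((1 : ℝ) / 3) with hv
  have hpu : (0:ℝ) ≤ (9 + Real.sqrt 69) / 18 := by positivity
  have hpv : (0:ℝ) ≤ (9 - Real.sqrt 69) / 18 := by linarith
  have hu3 : u ^ 3 = (9 + Real.sqrt 69) / 18 := by
    rw [hu, ← Real.rpow_natCast (((9 + Real.sqrt 69) / 18) ^ ((1 : ℝ) / 3)) 3,
      ← Real.rpow_mul hpu]
    norm_num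
  have hv3 : v ^ 3 = (9 - Real.sqrt 69) / 18 := by
    rw [hv, ← Real.rpow_natCast (((9 - Real.sqrt 69) / 18) ^ ((1 : ℝ) / 3)) 3,
      ← Real.rpow_mul hpv]
    norm_num
  have huv : u * v = 1 / 3 := by
    rw [hu, hv, ← Real.mul_rpow hpu hpv]
    have h69 : Real.sqrt 69 ^ 2 = 69 := Real.sq_sqrt (by norm_num)
    have : (9 + Real.sqrt 69) / 18 * ((9 - Real.sqrt 69) / 18) = 1 / 27 := by
      field_simp
      nlinarith [h69]
    rw [this, show (1/27 : ℝ) = (1/3) ^ (3:ℕ) by norm_num, ← Real.rpow_natCast ((1:ℝ)/3) 3,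
      ← Real.rpow_mul (by norm_num)]
    norm_num
  have hpl : plasticNumber = u + v := rfl
  have hsum : u^3 + v^3 = 1 := by rw [hu3, hv3]; ring
  rw [hpl]
  linear_combination hsum + (3*(u+v)) * huv

/-- A real 2×2 plastic matrix (`A³ − A − I = 0`) is either `ρ·I`, where `ρ` is the plastic
number, or conjugate to `B = !![α, 1 − α²; 1, 0]`, where `α` is the unique real solution of
`x³ − x + 1 = 0`. -/
theorem plastic_matrix_conjugate (α : ℝ) (hα : α ^ 3 - α + 1 = 0)
    (A : Matrix (Fin 2) (Fin 2) ℝ) (hA : A ^ 3 - A - 1 = 0) :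
    A = plasticNumber • (1 : Matrix (Fin 2) (Fin 2) ℝ) ∨
      ∃ C : Matrix (Fin 2) (Fin 2) ℝ, IsUnit C ∧
        A = C⁻¹ * !![α, 1 - α ^ 2; 1, 0] * C := by
  have e : ∀ i j, (A^3 - A - 1 : Matrix (Fin 2) (Fin 2) ℝ) i j
      = (0 : Matrix (Fin 2) (Fin 2) ℝ) i j := by
    intro i j; rw [hA]
  have e00 := e 0 0
  have e01 := e 0 1
  have e10 := e 1 0
  have e11 := e 1 1
  simp only [pow_succ, pow_zero, one_mul, Matrix.sub_apply, Matrix.mul_apply,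
    Fin.sum_univ_two, Matrix.zero_apply, Fin.isValue, Matrix.one_apply] at e00 e01 e10 e11
  norm_num [Fin.ext_iff] at e00 e01 e10 e11
  set a := A 0 0 with ha
  set b := A 0 1 with hb
  set c := A 1 0 with hc
  set d := A 1 1 with hd
  by_cases hk : (a+d)^2 - (a*d - b*c) - 1 = 0
  · -- conjugacy case
    right
    have ht : (a+d)^3 - (a+d) + 1 = 0 := by linear_combination (-(1:ℝ)/2)*e00 - (1/2)*e11 + (3/2)*(a+d)*hk
    have hmα : (-α)^3 - (-α) - 1 = 0 := by linear_combination -hα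
    have hmt : (-(a+d))^3 - (-(a+d)) - 1 = 0 := by linear_combination -ht
    have htα : a + d = α := by
      have := plastic_root_unique hmt hmα
      linarith
    have hdet : a*d - b*c = α^2 - 1 := by linear_combination -hk + (a+d+α)*htα
    have hbound : 3*α^2 > 4 := by
      have := plastic_root_bound hmα
      nlinarith
    have hquad : c*b + d^2 = α*d - (α^2 - 1) := by linear_combination d*htα - hdet
    have hc0 : c ≠ 0 := by
      intro h
      rw [h] at hquad
      nlinarith [sq_nonneg (2*d - α)]
    refine ⟨!![c, d; 0, 1], ?_, ?_⟩
    · rw [Matrix.isUnit_iff_isUnit_det, Matrix.det_fin_two_of]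
      simpa using hc0
    · have hCA : !![c, d; 0, 1] * A = !![α, 1 - α ^ 2; 1, 0] * !![c, d; 0, 1] := by
        have hAeta : A = !![a, b; c, d] := Matrix.eta_fin_two A
        rw [hAeta]
        ext i j
        fin_cases i <;> fin_cases j <;>
          simp [Matrix.mul_apply, Fin.sum_univ_two]
        · linear_combination c*htα
        · linear_combination hquad
      have hdu : IsUnit (!![c, d; 0, 1] : Matrix (Fin 2) (Fin 2) ℝ).det := by
        rw [Matrix.det_fin_two_of]; simpa using hc0
      calc A = (!![c, d; 0, 1])⁻¹ * (!![c, d; 0, 1] * A) := by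
              rw [← mul_assoc, Matrix.nonsing_inv_mul _ hdu, one_mul]
        _ = (!![c, d; 0, 1])⁻¹ * !![α, 1 - α ^ 2; 1, 0] * !![c, d; 0, 1] := by
              rw [hCA, mul_assoc]
  · -- scalar case
    left
    have hb0 : b = 0 := by
      have E01 : ((a+d)^2 - (a*d - b*c) - 1) * b = 0 := by linear_combination e01
      exact (mul_eq_zero.1 E01).resolve_left hk
    have hc0 : c = 0 := by
      have E10 : ((a+d)^2 - (a*d - b*c) - 1) * c = 0 := by linear_combination e10
      exact (mul_eq_zero.1 E10).resolve_left hk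
    have had : a = d := by
      have E : ((a+d)^2 - (a*d - b*c) - 1) * (a - d) = 0 := by linear_combination e00 - e11
      have := (mul_eq_zero.1 E).resolve_left hk
      linarith
    have ha3 : a^3 - a - 1 = 0 := by linear_combination e00 - (2*a*c + c*d)*hb0
    have haρ : a = plasticNumber := plastic_root_unique ha3 plastic_cubic
    ext i j
    fin_cases i <;> fin_cases j <;>
      simp [Matrix.smul_apply, Matrix.one_apply]
    · rw [← ha, haρ]
    · rw [← hb, hb0]
    · rw [← hc, hc0]
    · rw [← hd, ← had, haρ]
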